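/- The mutation operator M is chaotic according to Knudsen on (X_N, d): M has sensitive dependence on initial conditions (there exists δ₀ > 0 such that for every X ∈ X_N and every ε > 0 there exist Y ∈ B(X, ε) and n ∈ ℕ with d(M^n(X), M^n(Y)) ≥ δ₀), and M has a dense orbit (there exists X ∈ X_N whose orbit {M^n(X) : n ∈ ℕ} is dense in X_N). -/

import Mathlib

/-- The discrete metric on ℝ: `ddelta x y = 1` if `x ≠ y`, and `0` otherwise. -/
noncomputable def ddelta (x y : ℝ) : ℝ := if x = y then 0 else 1

/-- `Fdel (x₁, x₂) = |x₁| + δ(0, x₂)`. -/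
noncomputable def Fdel (x : ℝ × ℝ) : ℝ := |x.1| + ddelta 0 x.2

/-- A single mutation: a position in `{1,…,N}` together with a nucleotide in `{1,2,3,4}`
(encoded with `Fin N` and `Fin 4`). -/
abbrev Mut (N : ℕ) := Fin N × Fin 4

/-- A mutations sequence: an infinite sequence of mutations. -/
abbrev MutSeq (N : ℕ) := ℕ → Mut N

/-- A genome of size `N`: a sequence of `N` nucleotides in `{1,2,3,4}` (encoded by `Fin 4`,
where `0,1,2,3` stand for the labels `1,2,3,4`, i.e. `A,C,G,T`). -/
abbrev Genome (N : ℕ) := Fin N → Fin 4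

/-- The phase space `X_N = {1,2,3,4}^N × S_N`. -/
abbrev Phase (N : ℕ) := Genome N × MutSeq N

/-- A mutation regarded as a pair of real numbers, using the labels
`1,…,N` for positions and `1,2,3,4` for nucleotides. -/
noncomputable def mutR {N : ℕ} (m : Mut N) : ℝ × ℝ :=
  ((m.1.1 : ℝ) + 1, (m.2.1 : ℝ) + 1)

/-- `d_G(G, Ǧ) = Σ_{k=1}^{N} δ(G_k, Ǧ_k)`, with `δ` the discrete metric. -/
noncomputable def dG {N : ℕ} (G G' : Genome N) : ℝ :=
  ∑ k : Fin N, if G k = G' k then (0 : ℝ) else 1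

/-- `d_S(S, Š) = (9/N) Σ_{k=0}^{∞} F(S^k − Š^k)/10^(k+1)`. -/
noncomputable def dS {N : ℕ} (S S' : MutSeq N) : ℝ :=
  (9 / N) * ∑' k : ℕ, Fdel (mutR (S k) - mutR (S' k)) / 10 ^ (k + 1)

/-- The distance `d((G,S), (Ǧ,Š)) = d_G(G,Ǧ) + d_S(S,Š)` on the phase space. -/
noncomputable def dX {N : ℕ} (X Y : Phase N) : ℝ := dG X.1 Y.1 + dS X.2 Y.2

/-- The mutation operator `M(G, S) = (G', σ(S))`: the nucleotide of `G` at position `(S⁰)₁`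
is replaced by the nucleotide `(S⁰)₂`, and the mutations sequence is shifted. -/
noncomputable def Mop {N : ℕ} (X : Phase N) : Phase N :=
  (Function.update X.1 (X.2 0).1 (X.2 0).2, fun k => X.2 (k + 1))

/-- A set `U ⊆ X_N` is open for the metric `d` if around any of its points it
contains an open ball of positive radius. -/
def IsOpenD {N : ℕ} (U : Set (Phase N)) : Prop :=
  ∀ x ∈ U, ∃ ε > 0, ∀ y, dX x y < ε → y ∈ U


/-! Sensitivity: changing only the nucleotide written by the `n`-th mutation moves a point by at
most `10⁻ⁿ`, yet after `n + 1` steps the two genomes differ at the mutated position, so the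
orbits are at distance at least `1`.

Dense orbit: start from a mutations sequence in which every finite word of mutations occurs
(a disjunctive sequence). To approach `(H, T)` within `10⁻ᵐ`, go to an occurrence of the word
"write `H` position by position, then `T₀ ⋯ T_{m-1}`" and stop right after its first `N`
letters: the genome is then `H` and the sequence agrees with `T` for `m` terms. -/

open Function

lemma ddelta_nonneg (x y : ℝ) : 0 ≤ ddelta x y := by
  unfold ddelta; split_ifs <;> norm_num

lemma ddelta_le_one (x y : ℝ) : ddelta x y ≤ 1 := by
  unfold ddelta; split_ifs <;> norm_num

lemma Fdel_nonneg (x : ℝ × ℝ) : 0 ≤ Fdel x :=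
  add_nonneg (abs_nonneg _) (ddelta_nonneg _ _)

lemma Fdel_zero : Fdel 0 = 0 := by
  simp [Fdel, ddelta]

section Distance

variable {N : ℕ}

lemma Fdel_mutR_sub_le (a b : Mut N) : Fdel (mutR a - mutR b) ≤ N := by
  have ha : (a.1.1 : ℝ) + 1 ≤ N := by exact_mod_cast a.1.2
  have hb : (b.1.1 : ℝ) + 1 ≤ N := by exact_mod_cast b.1.2
  have hposition : |(a.1.1 : ℝ) - b.1.1| ≤ N - 1 := by
    rw [abs_sub_le_iff]
    constructor <;> linarith [Nat.cast_nonneg (α := ℝ) a.1.1, Nat.cast_nonneg (α := ℝ) b.1.1]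
  have hnuc := ddelta_le_one 0 (mutR a - mutR b).2
  simp only [Fdel, mutR, Prod.fst_sub, add_sub_add_right_eq_sub] at hnuc ⊢
  linarith

lemma dS_summand_le (S S' : MutSeq N) (k : ℕ) :
    Fdel (mutR (S k) - mutR (S' k)) / 10 ^ (k + 1) ≤ N * (1 / 10) ^ (k + 1) := by
  rw [one_div_pow, mul_one_div]
  gcongr
  exact Fdel_mutR_sub_le _ _

lemma summable_dS_summand (S S' : MutSeq N) :
    Summable fun k => Fdel (mutR (S k) - mutR (S' k)) / 10 ^ (k + 1) := by
  refine Summable.of_nonneg_of_le (fun k => div_nonneg (Fdel_nonneg _) (by positivity))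
    (dS_summand_le S S') ?_
  exact ((summable_nat_add_iff 1).mpr
    (summable_geometric_of_lt_one (by norm_num) (by norm_num))).mul_left _

lemma dS_nonneg (S S' : MutSeq N) : 0 ≤ dS S S' :=
  mul_nonneg (by positivity)
    (tsum_nonneg fun k => div_nonneg (Fdel_nonneg _) (by positivity))

lemma dS_le_of_eq_of_lt {S S' : MutSeq N} {m : ℕ} (h : ∀ k < m, S k = S' k) :
    dS S S' ≤ (1 / 10) ^ m := by
  have hN : (N : ℝ) ≠ 0 := by exact_mod_cast (S 0).1.pos.ne'
  set a := fun k => Fdel (mutR (S k) - mutR (S' k)) / 10 ^ (k + 1)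
  have hhead : ∑ k ∈ Finset.range m, a k = 0 :=
    Finset.sum_eq_zero fun k hk => by simp [a, h k (Finset.mem_range.mp hk), Fdel_zero]
  have htail : ∑' k, a (k + m) ≤ ∑' k, N * (1 / 10 : ℝ) ^ (m + 1) * (1 / 10) ^ k := by
    refine Summable.tsum_le_tsum (fun k => ?_)
      ((summable_nat_add_iff m).mpr (summable_dS_summand S S'))
      ((summable_geometric_of_lt_one (by norm_num) (by norm_num)).mul_left _)
    calc a (k + m) ≤ N * (1 / 10) ^ (k + m + 1) := dS_summand_le S S' (k + m)
      _ = _ := by ring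
  calc dS S S' = 9 / N * ∑' k, a (k + m) := by
        rw [dS, ← (summable_dS_summand S S').sum_add_tsum_nat_add m, hhead, zero_add]
    _ ≤ 9 / N * ∑' k, N * (1 / 10 : ℝ) ^ (m + 1) * (1 / 10) ^ k := by gcongr
    _ = (1 / 10) ^ m := by
        rw [tsum_mul_left, tsum_geometric_of_lt_one (by norm_num) (by norm_num)]
        field_simp
        ring

lemma dG_self (G : Genome N) : dG G G = 0 := by
  simp [dG]

lemma one_le_dG_of_ne {G G' : Genome N} {p : Fin N} (h : G p ≠ G' p) : 1 ≤ dG G G' := by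
  have := Finset.single_le_sum (f := fun k => if G k = G' k then (0 : ℝ) else 1)
    (fun k _ => by split_ifs <;> norm_num) (Finset.mem_univ p)
  simpa [dG, h] using this

lemma dX_le_of_fst_eq {X Y : Phase N} {m : ℕ} (hG : X.1 = Y.1) (hS : ∀ k < m, X.2 k = Y.2 k) :
    dX X Y ≤ (1 / 10) ^ m := by
  simpa [dX, hG, dG_self] using dS_le_of_eq_of_lt hS

end Distance

section Dynamics

variable {N : ℕ}

lemma Mop_iterate_snd (X : Phase N) (n : ℕ) : (Mop^[n] X).2 = fun k => X.2 (k + n) := by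
  induction n generalizing X with
  | zero => rfl
  | succ n ih =>
    rw [iterate_succ_apply, ih]
    funext k
    simp only [Mop]
    congr 1

lemma Mop_iterate_succ_fst (X : Phase N) (n : ℕ) :
    (Mop^[n + 1] X).1 = update (Mop^[n] X).1 (X.2 n).1 (X.2 n).2 := by
  rw [iterate_succ_apply', Mop, Mop_iterate_snd]
  simp only [zero_add]

lemma one_le_dX_Mop_iterate {X Y : Phase N} {n : ℕ} (hposition : (X.2 n).1 = (Y.2 n).1)
    (hnuc : (X.2 n).2 ≠ (Y.2 n).2) : 1 ≤ dX (Mop^[n + 1] X) (Mop^[n + 1] Y) := by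
  have hG : (Mop^[n + 1] X).1 (X.2 n).1 ≠ (Mop^[n + 1] Y).1 (X.2 n).1 := by
    rw [Mop_iterate_succ_fst, Mop_iterate_succ_fst, hposition]
    simpa only [update_self] using hnuc
  exact le_add_of_le_of_nonneg (one_le_dG_of_ne hG) (dS_nonneg _ _)

lemma Mop_iterate_fst_of_writes {X : Phase N} {H : Genome N}
    (h : ∀ i : Fin N, X.2 i = (i, H i)) : (Mop^[N] X).1 = H := by
  suffices ∀ m ≤ N, ∀ p : Fin N, p.1 < m → (Mop^[m] X).1 p = H p from
    funext fun p => this N le_rfl p p.2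
  intro m
  induction m with
  | zero => intro _ p hp; omega
  | succ m ih =>
    intro hm p hp
    rw [Mop_iterate_succ_fst, h ⟨m, hm⟩]
    by_cases hpm : p = ⟨m, hm⟩
    · subst hpm
      exact update_self ..
    · rw [update_of_ne hpm]
      exact ih (by omega) p (by have : p.1 ≠ m := fun hv => hpm (Fin.ext hv); omega)

end Dynamics

def IsDisjunctive {α : Type*} (S : ℕ → α) : Prop :=
  ∀ w : List α, ∃ L, ∀ j (hj : j < w.length), S (L + j) = w[j]

theorem exists_isDisjunctive {α : Type*} [Countable α] [Nonempty α] :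
    ∃ S : ℕ → α, IsDisjunctive S := by
  inhabit α
  obtain ⟨f, hf⟩ := exists_surjective_nat (List α)
  -- the block `[2 ^ e, 2 ^ (e + 1))` holds `f (unpair e).1`; each word gets arbitrarily long blocks
  refine ⟨fun k => (f (Nat.unpair (Nat.log 2 k)).1).getD (k - 2 ^ Nat.log 2 k) default, ?_⟩
  intro w
  obtain ⟨i, rfl⟩ := hf w
  set e := Nat.pair i (f i).length
  have hlen : (f i).length < 2 ^ e := (Nat.right_le_pair _ _).trans_lt e.lt_two_pow_self
  refine ⟨2 ^ e, fun j hj => ?_⟩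
  have hlog : Nat.log 2 (2 ^ e + j) = e :=
    Nat.log_eq_of_pow_le_of_lt_pow (by omega) (by rw [pow_succ]; omega)
  simp [hlog, e, List.getElem?_eq_getElem hj]

/-- The mutation operator `M` is chaotic according to Knudsen on `(X_N, d)`: it has
sensitive dependence on initial conditions, and it admits a dense orbit. -/
theorem Mop_Knudsen_chaotic (N : ℕ) (hN : 1 ≤ N) :
    (∃ δ₀ > (0 : ℝ), ∀ X : Phase N, ∀ ε > (0 : ℝ),
      ∃ Y : Phase N, dX X Y < ε ∧ ∃ n : ℕ,
        δ₀ ≤ dX ((Mop (N := N))^[n] X) ((Mop (N := N))^[n] Y)) ∧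
    (∃ X : Phase N, ∀ Y : Phase N, ∀ ε > (0 : ℝ),
      ∃ n : ℕ, dX Y ((Mop (N := N))^[n] X) < ε) := by
  refine ⟨⟨1, one_pos, fun ⟨G, S⟩ ε hε => ?_⟩, ?_⟩
  · obtain ⟨n, hn⟩ := exists_pow_lt_of_lt_one hε (by norm_num : (1 / 10 : ℝ) < 1)
    let S' := update S n ((S n).1, (S n).2 + 1)
    have hagree : ∀ k < n, S k = S' k := fun k hk => (update_of_ne hk.ne _ _).symm
    have hclose : dX (G, S) (G, S') < ε :=
      (dX_le_of_fst_eq (X := (G, S)) (Y := (G, S')) rfl hagree).trans_lt hn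
    exact ⟨(G, S'), hclose, n + 1, one_le_dX_Mop_iterate (by simp [S']) (by simp [S'])⟩
  · have : Nonempty (Mut N) := ⟨(⟨0, hN⟩, 0)⟩
    obtain ⟨S, hS⟩ := exists_isDisjunctive (α := Mut N)
    refine ⟨(fun _ => 0, S), fun ⟨H, T⟩ ε hε => ?_⟩
    obtain ⟨m, hm⟩ := exists_pow_lt_of_lt_one hε (by norm_num : (1 / 10 : ℝ) < 1)
    obtain ⟨L, hL⟩ :=
      hS (List.ofFn (fun i : Fin N => (i, H i)) ++ List.ofFn (fun k : Fin m => T k))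
    refine ⟨L + N, lt_of_le_of_lt (dX_le_of_fst_eq ?_ fun k hk => ?_) hm⟩
    · rw [add_comm, iterate_add_apply]
      refine (Mop_iterate_fst_of_writes fun i => ?_).symm
      have := hL i (by simp; omega)
      rw [List.getElem_append_left (by simp), List.getElem_ofFn] at this
      simpa [Mop_iterate_snd, add_comm] using this
    · simpa [Mop_iterate_snd, add_comm, add_left_comm, hk] using (hL (N + k) (by simpa)).symm
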